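/- arXiv:1601.06122 — 3 statements merged into one kernel-verified Lean document; each statement's English description precedes it below -/
import Mathlib

section
/- For q in ℂ with (q;q)_j ≠ 0 for all j ≤ n, the monomial x^n admits the inversion formula x^n = [b_s;q]_n / [a_r;q]_n · ((-1)^n q^{n(n-1)/2})^{r-s} · ∑_{k=0}^{n} (-1)^k [n choose k]_q q^{k(k-1)/2} · P_k(x), where P_k(x) = ∑_{j=0}^{k} ((q^{-k};q)_j [a_r;q]_j / ([b_s;q]_j (q;q)_j)) ((-1)^j q^{j(j-1)/2})^{s-r} (qx)^j is the basic hypergeometric polynomial {}_{r+1}φ_s(q^{-k},(a_r);(b_s); q; qx). This is an identity of polynomials in x, assuming the parameters a_1,…,a_r, b_1,…,b_s are such that all relevant q-shifted factorials are nonzero. -/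
open Finset

/-- q-shifted factorial `(a;q)_n = ∏_{j=0}^{n-1} (1 - a q^j)`. -/
noncomputable def qPoch (a q : ℂ) (n : ℕ) : ℂ :=
  ∏ j ∈ Finset.range n, (1 - a * q ^ j)

/-- Gaussian (q-binomial) coefficient. -/
noncomputable def qBinom (q : ℂ) (n k : ℕ) : ℂ :=
  qPoch q q n / (qPoch q q k * qPoch q q (n - k))


/-! Expanding `P_k` and exchanging the two sums, the coefficient of the `j`-th term
`c_j = [a_r;q]_j / ([b_s;q]_j (q;q)_j) ((-1)^j q^{j(j-1)/2})^{s-r} (qx)^j` becomes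
`∑_{k=j}^n (-1)^k [n choose k]_q q^{k(k-1)/2} (q^{-k};q)_j`. Since
`(q^{-k};q)_j = (-1)^j q^{j(j-1)/2 - kj} (q;q)_k / (q;q)_{k-j}`, this is a multiple of
`∑_m (-1)^m q^{m(m-1)/2} [n-j choose m]_q = (1;q)_{n-j}` (q-binomial theorem), which vanishes
unless `j = n`. Only `c_n (q;q)_n / q^n` survives, and the prefactor reduces it to `x^n`. -/

section

variable (q : ℂ)

@[simp]
lemma qPoch_zero (a : ℂ) : qPoch a q 0 = 1 := by
  simp [qPoch]

lemma qPoch_succ (a : ℂ) (k : ℕ) : qPoch a q (k + 1) = qPoch a q k * (1 - a * q ^ k) := by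
  simp [qPoch, prod_range_succ]

lemma qPoch_succ' (a : ℂ) (k : ℕ) : qPoch a q (k + 1) = (1 - a) * qPoch (a * q) q k := by
  rw [qPoch, qPoch, prod_range_succ', mul_comm]
  simp [pow_succ', mul_assoc]

lemma qPoch_one (N : ℕ) : qPoch 1 q N = if N = 0 then 1 else 0 := by
  cases N <;> simp [qPoch_succ']

lemma qPoch_self_ne_zero {n : ℕ} (hq : ∀ j, 1 ≤ j → j ≤ n → q ^ j ≠ 1) {k : ℕ} (hk : k ≤ n) :
    qPoch q q k ≠ 0 := by
  rw [qPoch, prod_ne_zero_iff]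
  intro i hi
  rw [← pow_succ', sub_ne_zero]
  exact (hq (i + 1) (by omega) (by have := mem_range.mp hi; omega)).symm

lemma qPoch_inv_pow_add (hq : q ≠ 0) (j m : ℕ) :
    qPoch (q ^ (j + m))⁻¹ q j * q ^ ((j + m) * j) * qPoch q q m =
      (-1) ^ j * q ^ j.choose 2 * qPoch q q (j + m) := by
  induction j generalizing m with
  | zero => simp
  | succ j ih =>
    have ih := ih (m + 1)
    rw [show j + (m + 1) = j + 1 + m by ring, qPoch_succ q q m] at ih
    have hinv : (q ^ (j + 1 + m))⁻¹ * q ^ (j + 1 + m) = 1 := inv_mul_cancel₀ (pow_ne_zero _ hq)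
    rw [qPoch_succ]
    generalize qPoch (q ^ (j + 1 + m))⁻¹ q j = P at ih ⊢
    rw [Nat.choose_succ_succ', Nat.choose_one_right, pow_add,
      show (j + 1 + m) * (j + 1) = (j + 1 + m) * j + (j + 1 + m) by ring, pow_add]
    linear_combination (-q ^ j) * ih - P * q ^ ((j + 1 + m) * j) * qPoch q q m * q ^ j * hinv

lemma qBinom_zero_right {N : ℕ} (h : qPoch q q N ≠ 0) : qBinom q N 0 = 1 := by
  simp [qBinom, h]

lemma qBinom_self {N : ℕ} (h : qPoch q q N ≠ 0) : qBinom q N N = 1 := by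
  simp [qBinom, h]

lemma qBinom_succ_succ {N m : ℕ} (hmN : m < N) (hQ : ∀ k ≤ N + 1, qPoch q q k ≠ 0) :
    qBinom q (N + 1) (m + 1) = q ^ (m + 1) * qBinom q N (m + 1) + qBinom q N m := by
  obtain ⟨v, rfl⟩ : ∃ v, N = m + v + 1 := ⟨N - (m + 1), by omega⟩
  have hm := hQ m (by omega)
  have hv := hQ v (by omega)
  have hmv := hQ (m + v + 1) (by omega)
  have hm₁ := hQ (m + 1) (by omega)
  have hv₁ := hQ (v + 1) (by omega)
  rw [qPoch_succ] at hm₁ hv₁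
  replace hm₁ := right_ne_zero_of_mul hm₁
  replace hv₁ := right_ne_zero_of_mul hv₁
  rw [qBinom, qBinom, qBinom, show m + v + 1 + 1 - (m + 1) = v + 1 by omega,
    show m + v + 1 - (m + 1) = v by omega, show m + v + 1 - m = v + 1 by omega,
    qPoch_succ q q (m + v + 1), qPoch_succ q q m, qPoch_succ q q v]
  field_simp
  ring

theorem qPoch_eq_sum_qBinom {N : ℕ} (hQ : ∀ k ≤ N, qPoch q q k ≠ 0) (z : ℂ) :
    qPoch z q N = ∑ m ∈ range (N + 1), (-1) ^ m * q ^ m.choose 2 * qBinom q N m * z ^ m := by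
  induction N generalizing z with
  | zero => simp [qBinom]
  | succ N ih =>
    have hQN : ∀ k ≤ N, qPoch q q k ≠ 0 := fun k hk => hQ k (by omega)
    set v : ℕ → ℂ := fun m => (-1) ^ m * q ^ m.choose 2 * qBinom q N m * (z * q) ^ m with hv
    have step : ∀ m ∈ range N, (-1) ^ (m + 1) * q ^ (m + 1).choose 2 * qBinom q (N + 1) (m + 1) *
        z ^ (m + 1) = v (m + 1) - z * v m := by
      intro m hm
      simp only [hv, qBinom_succ_succ q (mem_range.mp hm) hQ, Nat.choose_succ_succ',
        Nat.choose_one_right]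
      ring
    have last : (-1) ^ (N + 1) * q ^ (N + 1).choose 2 * qBinom q (N + 1) (N + 1) * z ^ (N + 1) =
        -(z * v N) := by
      simp only [hv, qBinom_self q (hQ _ le_rfl), qBinom_self q (hQN _ le_rfl),
        Nat.choose_succ_succ', Nat.choose_one_right]
      ring
    have first : v 0 = 1 := by simp [hv, qBinom_zero_right q (hQN _ le_rfl)]
    have hs₁ := sum_range_succ' v N
    have hs₂ := sum_range_succ v N
    rw [qPoch_succ', ih hQN, sum_range_succ _ (N + 1),
      sum_range_succ' (fun m => (-1) ^ m * q ^ m.choose 2 * qBinom q (N + 1) m * z ^ m),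
      sum_congr rfl step, last,
      qBinom_zero_right q (hQ _ le_rfl), Nat.choose_eq_zero_of_lt two_pos, sum_sub_distrib, ← mul_sum]
    linear_combination hs₁ - z * hs₂ + first

lemma add_choose_two_add_choose_two (j m : ℕ) :
    (j + m).choose 2 + j.choose 2 + j = (j + m) * j + m.choose 2 := by
  apply Nat.cast_injective (R := ℚ)
  push_cast [Nat.cast_choose_two]
  ring

lemma sum_Ico_qBinom_mul_qPoch_inv_pow (hq : q ≠ 0) {n j : ℕ} (hQ : ∀ k ≤ n, qPoch q q k ≠ 0)
    (hj : j ≤ n) :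
    ∑ k ∈ Ico j (n + 1), (-1) ^ k * qBinom q n k * q ^ k.choose 2 * qPoch (q ^ k)⁻¹ q j =
      if j = n then qPoch q q n / q ^ n else 0 := by
  have term : ∀ m ∈ range (n + 1 - j),
      (-1) ^ (j + m) * qBinom q n (j + m) * q ^ (j + m).choose 2 * qPoch (q ^ (j + m))⁻¹ q j =
        qPoch q q n / (qPoch q q (n - j) * q ^ j) *
          ((-1) ^ m * q ^ m.choose 2 * qBinom q (n - j) m * 1 ^ m) := by
    intro m hm
    rw [mem_range] at hm
    have hP := qPoch_inv_pow_add q hq j m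
    have hexp : q ^ (j + m).choose 2 * q ^ j.choose 2 * q ^ j = q ^ ((j + m) * j) * q ^ m.choose 2 := by
      rw [← pow_add, ← pow_add, ← pow_add, add_choose_two_add_choose_two]
    have hsign : (-1 : ℂ) ^ (j + m) * (-1) ^ j = (-1) ^ m := by
      rw [pow_add, mul_right_comm, ← mul_pow]; norm_num
    have := hQ (j + m) (by omega)
    have := hQ m (by omega)
    have := hQ (n - j) (by omega)
    have := hQ (n - j - m) (by omega)
    rw [qBinom, qBinom, show n - (j + m) = n - j - m by omega]
    generalize qPoch (q ^ (j + m))⁻¹ q j = P at hP ⊢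
    field_simp
    refine mul_left_cancel₀ (pow_ne_zero ((j + m) * j) hq) ?_
    linear_combination (-1) ^ (j + m) * qPoch q q n * q ^ (j + m).choose 2 * q ^ j * hP +
      qPoch q q n * qPoch q q (j + m) * ((-1) ^ (j + m) * (-1) ^ j) * hexp +
      qPoch q q n * qPoch q q (j + m) * q ^ ((j + m) * j) * q ^ m.choose 2 * hsign
  rw [sum_Ico_eq_sum_range, sum_congr rfl term, ← mul_sum, show n + 1 - j = n - j + 1 by omega,
    ← qPoch_eq_sum_qBinom q (fun k hk => hQ k (by omega)), qPoch_one]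
  by_cases hjn : j = n
  · subst hjn
    simp
  · simp [hjn, show n - j ≠ 0 by omega]

theorem sum_qBinom_mul_sum_qPoch_inv_pow (hq : q ≠ 0) {n : ℕ} (hQ : ∀ k ≤ n, qPoch q q k ≠ 0)
    (c : ℕ → ℂ) :
    ∑ k ∈ range (n + 1), (-1) ^ k * qBinom q n k * q ^ k.choose 2 *
        ∑ j ∈ range (k + 1), qPoch (q ^ k)⁻¹ q j * c j =
      qPoch q q n / q ^ n * c n := by
  calc _ = ∑ k ∈ range (n + 1), ∑ j ∈ range (k + 1),
          (-1) ^ k * qBinom q n k * q ^ k.choose 2 * qPoch (q ^ k)⁻¹ q j * c j := by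
        simp only [mul_sum, mul_assoc]
    _ = ∑ j ∈ range (n + 1), (∑ k ∈ Ico j (n + 1),
          (-1) ^ k * qBinom q n k * q ^ k.choose 2 * qPoch (q ^ k)⁻¹ q j) * c j := by
        rw [sum_comm' (t' := range (n + 1)) (s' := fun j => Ico j (n + 1))]
        · simp only [sum_mul]
        · intro k j
          simp only [mem_range, mem_Ico]
          omega
    _ = ∑ j ∈ range (n + 1), (if j = n then qPoch q q n / q ^ n else 0) * c j := by
        refine sum_congr rfl fun j hj => ?_
        rw [sum_Ico_qBinom_mul_qPoch_inv_pow q hq hQ (by simpa [Nat.lt_succ_iff] using hj)]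
    _ = qPoch q q n / q ^ n * c n := by simp

end

/-- inversion formula for basic hypergeometric polynomials
`P_k(x) = {}_{r+1}φ_s(q^{-k},(a_r);(b_s);q;qx)`:
`x^n = ([b_s;q]_n/[a_r;q]_n) ((-1)^n q^{n(n-1)/2})^{r-s}
       ∑_{k=0}^n (-1)^k [n choose k]_q q^{k(k-1)/2} P_k(x)`. -/
theorem inversion_basic_hypergeometric (q : ℂ) (n : ℕ) (r s : ℕ)
    (a : Fin r → ℂ) (b : Fin s → ℂ)
    (hq0 : q ≠ 0) (hq1 : ∀ j, 1 ≤ j → j ≤ n → q ^ j ≠ 1)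
    (ha : ∀ i, qPoch (a i) q n ≠ 0) (hb : ∀ i, qPoch (b i) q n ≠ 0) (x : ℂ) :
    x ^ n =
      ((∏ i, qPoch (b i) q n) / (∏ i, qPoch (a i) q n)) *
        ((-1) ^ n * q ^ (n * (n - 1) / 2)) ^ ((r : ℤ) - (s : ℤ)) *
        ∑ k ∈ Finset.range (n + 1), (-1) ^ k * qBinom q n k * q ^ (k * (k - 1) / 2) *
          (∑ j ∈ Finset.range (k + 1),
            (qPoch ((q ^ k)⁻¹) q j * ∏ i, qPoch (a i) q j) /
              ((∏ i, qPoch (b i) q j) * qPoch q q j) *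
              ((-1) ^ j * q ^ (j * (j - 1) / 2)) ^ ((s : ℤ) - (r : ℤ)) * (q * x) ^ j) := by
  set c : ℕ → ℂ := fun j => (∏ i, qPoch (a i) q j) / ((∏ i, qPoch (b i) q j) * qPoch q q j) *
    ((-1) ^ j * q ^ (j * (j - 1) / 2)) ^ ((s : ℤ) - (r : ℤ)) * (q * x) ^ j
  have hQ : ∀ k ≤ n, qPoch q q k ≠ 0 := fun k hk => qPoch_self_ne_zero q hq1 hk
  have hsum := sum_qBinom_mul_sum_qPoch_inv_pow q hq0 hQ c
  simp only [Nat.choose_two_right] at hsum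
  have hterm : ∀ k j, (qPoch (q ^ k)⁻¹ q j * ∏ i, qPoch (a i) q j) /
      ((∏ i, qPoch (b i) q j) * qPoch q q j) *
      ((-1) ^ j * q ^ (j * (j - 1) / 2)) ^ ((s : ℤ) - (r : ℤ)) * (q * x) ^ j =
      qPoch (q ^ k)⁻¹ q j * c j := by
    intro k j
    simp only [c]
    ring
  simp only [hterm, hsum, c]
  have hA : ∏ i, qPoch (a i) q n ≠ 0 := prod_ne_zero_iff.mpr fun i _ => ha i
  have hB : ∏ i, qPoch (b i) q n ≠ 0 := prod_ne_zero_iff.mpr fun i _ => hb i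
  have hε : ((-1) ^ n * q ^ (n * (n - 1) / 2)) ^ ((r : ℤ) - s) *
      ((-1) ^ n * q ^ (n * (n - 1) / 2)) ^ ((s : ℤ) - r) = 1 := by
    rw [← zpow_add₀ (by simp [hq0])]
    simp
  have := hQ n le_rfl
  field_simp
  linear_combination (-x ^ n * q ^ n) * hε
end

section
/- Let {P_n} be a monic polynomial set expanded as P_n(x) = ∑_{k=0}^n A_k(n) B_{n−k}(x) in a basis {B_n} of monic polynomials of degree n (so A_0(n) = 1). Define b_0(n,0) = 1, b_0(n,k) = 0 for k ≥ 1, and b_{m+1}(n,k) = b_m(n,k+1) − b_m(n,0) A_{k+1}(n−m) for 0 ≤ m ≤ n−1, 0 ≤ k ≤ n−m−1. Then B_n(x) = ∑_{m=0}^n b_m(n,0) P_{n−m}(x). -/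
/-!
Peel off `P_n, P_{n-1}, …` one at a time: after `m` steps, `B_n` equals
`∑_{j<m} b_j(n,0) P_{n-j}` plus the remainder `∑_k b_m(n,k) B_{n-m-k}`. Subtracting
`b_m(n,0) P_{n-m}` from the remainder and expanding `P_{n-m}` in the basis `{B_j}` leaves
exactly the remainder with coefficients `b_{m+1}(n,·)`; this is the recurrence for `b`.
After `n` steps the remainder is `b_n(n,0) B_0 = b_n(n,0) P_0`, and the sum telescopes.
-/

open Finset Polynomial

section Inversion

variable {R M : Type*} [Ring R] [AddCommGroup M] [Module R M]
  (P B : ℕ → M) (A : ℕ → ℕ → R) (b : ℕ → ℕ → ℕ → R)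

/-- The part of `B n` not yet expressed through the `P j` after `m` inversion steps. -/
def inversionRemainder (n m : ℕ) : M :=
  ∑ k ∈ range (n - m + 1), b m n k • B (n - m - k)

variable {P B A b}

theorem inversionRemainder_zero (hb00 : ∀ n, b 0 n 0 = 1)
    (hb0k : ∀ n k, 1 ≤ k → b 0 n k = 0) (n : ℕ) :
    inversionRemainder B b n 0 = B n := by
  rw [inversionRemainder, sum_eq_single_of_mem 0 (by simp)]
  · simp [hb00]
  · intro k _ hk
    rw [hb0k n k (Nat.one_le_iff_ne_zero.mpr hk), zero_smul]

theorem inversionRemainder_self (hA0 : ∀ n, A 0 n = 1)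
    (hexp : ∀ n, P n = ∑ k ∈ range (n + 1), A k n • B (n - k)) (n : ℕ) :
    inversionRemainder B b n n = b n n 0 • P 0 := by
  simp [inversionRemainder, hexp 0, hA0]

theorem inversionRemainder_sub_succ (hA0 : ∀ n, A 0 n = 1)
    (hexp : ∀ n, P n = ∑ k ∈ range (n + 1), A k n • B (n - k))
    (hbrec : ∀ n m k, m ≤ n - 1 → k ≤ n - m - 1 →
      b (m + 1) n k = b m n (k + 1) - b m n 0 * A (k + 1) (n - m))
    {n m : ℕ} (hm : m < n) :
    inversionRemainder B b n m - inversionRemainder B b n (m + 1) = b m n 0 • P (n - m) := by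
  have hsucc : inversionRemainder B b n (m + 1) =
      ∑ k ∈ range (n - m),
        (b m n (k + 1) - b m n 0 * A (k + 1) (n - m)) • B (n - m - (k + 1)) := by
    rw [inversionRemainder, show n - (m + 1) + 1 = n - m by omega]
    refine sum_congr rfl fun k hk => ?_
    rw [mem_range] at hk
    rw [hbrec n m k (by omega) (by omega), show n - (m + 1) - k = n - m - (k + 1) by omega]
  rw [hsucc, inversionRemainder, hexp, smul_sum, sum_range_succ', sum_range_succ']
  simp only [sub_smul, sum_sub_distrib, mul_smul, hA0, one_smul, Nat.sub_zero]
  abel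

theorem inversion_of_expansion (hA0 : ∀ n, A 0 n = 1)
    (hexp : ∀ n, P n = ∑ k ∈ range (n + 1), A k n • B (n - k))
    (hb00 : ∀ n, b 0 n 0 = 1) (hb0k : ∀ n k, 1 ≤ k → b 0 n k = 0)
    (hbrec : ∀ n m k, m ≤ n - 1 → k ≤ n - m - 1 →
      b (m + 1) n k = b m n (k + 1) - b m n 0 * A (k + 1) (n - m))
    (n : ℕ) :
    B n = ∑ m ∈ range (n + 1), b m n 0 • P (n - m) := by
  calc B n = inversionRemainder B b n 0 := (inversionRemainder_zero hb00 hb0k n).symm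
    _ = ∑ m ∈ range n, (inversionRemainder B b n m - inversionRemainder B b n (m + 1))
          + inversionRemainder B b n n := by rw [sum_range_sub']; abel
    _ = ∑ m ∈ range (n + 1), b m n 0 • P (n - m) := by
      rw [sum_range_succ, inversionRemainder_self hA0 hexp, Nat.sub_self]
      congr 1
      exact sum_congr rfl fun m hm =>
        inversionRemainder_sub_succ hA0 hexp hbrec (mem_range.mp hm)

end Inversion

theorem inversion_recurrence_general {F : Type*} [Field F]
    (P B : ℕ → Polynomial F) (A : ℕ → ℕ → F) (b : ℕ → ℕ → ℕ → F)
    (hA0 : ∀ n, A 0 n = 1)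
    (hexp : ∀ n, P n = ∑ k ∈ Finset.range (n + 1), A k n • B (n - k))
    (hb00 : ∀ n, b 0 n 0 = 1)
    (hb0k : ∀ n k, 1 ≤ k → b 0 n k = 0)
    (hbrec : ∀ n m k, m ≤ n - 1 → k ≤ n - m - 1 →
      b (m + 1) n k = b m n (k + 1) - b m n 0 * A (k + 1) (n - m)) :
    ∀ n, B n = ∑ m ∈ Finset.range (n + 1), b m n 0 • P (n - m) :=
  inversion_of_expansion hA0 hexp hb00 hb0k hbrec

/-- Ben Romdhane's inversion theorem: let `{P_n}` be monic of degree `n`,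
expanded as `P_n = ∑_{k=0}^n A_k(n) B_{n-k}` in a basis of monic polynomials `B_n` of
degree `n` (so `A_0(n) = 1`).  Define `b_0(n,0) = 1`, `b_0(n,k) = 0` for `k ≥ 1`, and
`b_{m+1}(n,k) = b_m(n,k+1) − b_m(n,0) A_{k+1}(n−m)` for `0 ≤ m ≤ n−1`, `0 ≤ k ≤ n−m−1`.
Then `B_n = ∑_{m=0}^n b_m(n,0) P_{n−m}`. -/
theorem inversion_recurrence {F : Type*} [Field F]
    (P B : ℕ → Polynomial F) (A : ℕ → ℕ → F) (b : ℕ → ℕ → ℕ → F)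
    (hPmonic : ∀ n, (P n).Monic) (hPdeg : ∀ n, (P n).natDegree = n)
    (hBmonic : ∀ n, (B n).Monic) (hBdeg : ∀ n, (B n).natDegree = n)
    (hA0 : ∀ n, A 0 n = 1)
    (hexp : ∀ n, P n = ∑ k ∈ Finset.range (n + 1), A k n • B (n - k))
    (hb00 : ∀ n, b 0 n 0 = 1)
    (hb0k : ∀ n k, 1 ≤ k → b 0 n k = 0)
    (hbrec : ∀ n m k, m ≤ n - 1 → k ≤ n - m - 1 →
      b (m + 1) n k = b m n (k + 1) - b m n 0 * A (k + 1) (n - m)) :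
    ∀ n, B n = ∑ m ∈ Finset.range (n + 1), b m n 0 • P (n - m) :=
  inversion_recurrence_general P B A b hA0 hexp hb00 hb0k hbrec
end

section
/- The generalized hypergeometric inversion holds: for parameters (a_r), (b_s) ∈ ℂ with (a_i)_n ≠ 0 and (b_i)_n ≠ 0, x^n = ((b_1)_n ⋯ (b_s)_n / ((a_1)_n ⋯ (a_r)_n)) · ∑_{m=0}^{n} C(n,m) (−1)^m F_m(x), where F_m(x) = ∑_{j=0}^{m} ((−m)_j (a_1)_j ⋯ (a_r)_j / ((b_1)_j ⋯ (b_s)_j · j!)) x^j is the terminating hypergeometric polynomial {}_{r+1}F_s(−m,(a_r);(b_s);x), and (λ)_j = λ(λ+1)⋯(λ+j−1) is the Pochhammer symbol. This is an identity of polynomials in x. -/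
/-!
Writing `F_m(x) = ∑_j (-m)_j c_j x^j`, the binomial transform `∑_m C(n,m) (-1)^m F_m(x)` has
`x^j`-coefficient `c_j ∑_m C(n,m) (-1)^m (-m)_j`, with `(-m)_j = (-1)^j m(m-1)⋯(m-j+1)`.
As `C(n,m) m(m-1)⋯(m-j+1) = n(n-1)⋯(n-j+1) C(n-j,m-j)`, this alternating sum collapses to a
multiple of `∑_k (-1)^k C(n-j,k)`, which vanishes unless `j = n`; there it equals `n!`.
So only the top term `n! c_n x^n` survives.
-/

open Finset

/-- Pochhammer symbol `(λ)_j = ∏_{i=0}^{j-1} (λ + i)`. -/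
noncomputable def poch (l : ℂ) (j : ℕ) : ℂ :=
  ∏ i ∈ Finset.range j, (l + i)

lemma poch_eq_eval_ascPochhammer (l : ℂ) (j : ℕ) : poch l j = (ascPochhammer ℂ j).eval l := by
  induction j with
  | zero => simp [poch]
  | succ j ih => rw [poch, prod_range_succ, ← poch, ih, ascPochhammer_succ_eval]

lemma poch_neg_natCast (m j : ℕ) : poch (-m) j = (-1) ^ j * m.descFactorial j := by
  rw [poch_eq_eval_ascPochhammer, ascPochhammer_eval_neg_eq_descPochhammer,
    descPochhammer_eval_eq_descFactorial]

lemma poch_neg_natCast_eq_zero {m j : ℕ} (h : m < j) : poch (-m) j = 0 := by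
  simp [poch_neg_natCast, Nat.descFactorial_eq_zero_iff_lt.2 h]

lemma Nat.add_choose_add_mul_descFactorial (j k i : ℕ) :
    (j + k).choose (j + i) * (j + i).descFactorial j = (j + k).descFactorial j * k.choose i := by
  rw [Nat.descFactorial_eq_factorial_mul_choose, Nat.descFactorial_eq_factorial_mul_choose,
    Nat.mul_left_comm, Nat.choose_mul (Nat.le_add_right j i), Nat.add_sub_cancel_left,
    Nat.add_sub_cancel_left, Nat.mul_assoc]

lemma alternating_sum_range_choose_mul_descFactorial (n j : ℕ) :
    ∑ m ∈ range (n + 1), (-1 : ℤ) ^ m * n.choose m * m.descFactorial j =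
      if j = n then (-1 : ℤ) ^ n * n.factorial else 0 := by
  rcases lt_or_ge n j with hnj | hjn
  · rw [if_neg hnj.ne', sum_eq_zero]
    intro m hm
    rw [Nat.descFactorial_eq_zero_iff_lt.2 (by grind), Nat.cast_zero, mul_zero]
  obtain ⟨k, rfl⟩ := Nat.exists_eq_add_of_le hjn
  have hlow : ∑ m ∈ range j, (-1 : ℤ) ^ m * (j + k).choose m * m.descFactorial j = 0 :=
    sum_eq_zero fun m hm ↦ by
      rw [Nat.descFactorial_eq_zero_iff_lt.2 (mem_range.1 hm), Nat.cast_zero, mul_zero]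
  rw [add_assoc, sum_range_add, hlow, zero_add]
  calc ∑ i ∈ range (k + 1), (-1 : ℤ) ^ (j + i) * (j + k).choose (j + i) * (j + i).descFactorial j
      = ∑ i ∈ range (k + 1), (-1 : ℤ) ^ j * (j + k).descFactorial j * ((-1) ^ i * k.choose i) := by
        refine sum_congr rfl fun i _ ↦ ?_
        rw [pow_add, mul_assoc, ← Nat.cast_mul, Nat.add_choose_add_mul_descFactorial]
        push_cast
        ring
    _ = if j = j + k then (-1 : ℤ) ^ (j + k) * (j + k).factorial else 0 := by
        rw [← mul_sum, Int.alternating_sum_range_choose]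
        rcases eq_or_ne k 0 with rfl | hk
        · simp [Nat.descFactorial_self]
        · rw [if_neg hk, if_neg (by omega), mul_zero]

lemma sum_range_choose_mul_neg_one_pow_mul_poch_neg (n j : ℕ) :
    ∑ m ∈ range (n + 1), (n.choose m : ℂ) * (-1) ^ m * poch (-m) j =
      if j = n then (n.factorial : ℂ) else 0 := by
  have h := congrArg (Int.cast : ℤ → ℂ) (alternating_sum_range_choose_mul_descFactorial n j)
  push_cast at h
  calc ∑ m ∈ range (n + 1), (n.choose m : ℂ) * (-1) ^ m * poch (-m) j
      = (-1) ^ j * ∑ m ∈ range (n + 1), (-1 : ℂ) ^ m * n.choose m * m.descFactorial j := by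
        rw [mul_sum]
        exact sum_congr rfl fun m _ ↦ by rw [poch_neg_natCast]; ring
    _ = _ := by
        rw [h]
        split_ifs with hjn
        · rw [hjn, ← mul_assoc, ← mul_pow, neg_one_mul, neg_neg, one_pow, one_mul]
        · rw [mul_zero]

lemma sum_range_choose_mul_neg_one_pow_mul_sum_poch_neg (n : ℕ) (c : ℕ → ℂ) :
    ∑ m ∈ range (n + 1), (n.choose m : ℂ) * (-1) ^ m * ∑ j ∈ range (m + 1), poch (-m) j * c j =
      n.factorial * c n := by
  have hext : ∀ m ∈ range (n + 1),
      ∑ j ∈ range (m + 1), poch (-m) j * c j = ∑ j ∈ range (n + 1), poch (-m) j * c j := by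
    intro m hm
    refine sum_subset (range_subset_range.2 (by grind)) fun j _ hj ↦ ?_
    rw [poch_neg_natCast_eq_zero (by grind), zero_mul]
  calc _ = ∑ m ∈ range (n + 1), ∑ j ∈ range (n + 1),
          (n.choose m : ℂ) * (-1) ^ m * poch (-m) j * c j := by
        refine sum_congr rfl fun m hm ↦ ?_
        simp only [hext m hm, mul_sum, mul_assoc]
    _ = ∑ j ∈ range (n + 1),
          (∑ m ∈ range (n + 1), (n.choose m : ℂ) * (-1) ^ m * poch (-m) j) * c j := by
        rw [sum_comm]
        simp only [sum_mul]
    _ = n.factorial * c n := by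
        simp [sum_range_choose_mul_neg_one_pow_mul_poch_neg]

/-- generalized hypergeometric inversion:
`x^n = ([b_s]_n/[a_r]_n) ∑_{m=0}^n C(n,m) (−1)^m F_m(x)` where
`F_m(x) = {}_{r+1}F_s(−m,(a_r);(b_s);x)`. -/
theorem inversion_hypergeometric (n : ℕ) (r s : ℕ) (a : Fin r → ℂ) (b : Fin s → ℂ)
    (ha : ∀ i, poch (a i) n ≠ 0) (hb : ∀ i j, j ≤ n → poch (b i) j ≠ 0) (x : ℂ) :
    x ^ n =
      ((∏ i, poch (b i) n) / (∏ i, poch (a i) n)) *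
        ∑ m ∈ Finset.range (n + 1), (n.choose m : ℂ) * (-1) ^ m *
          (∑ j ∈ Finset.range (m + 1),
            (poch (-(m : ℂ)) j * ∏ i, poch (a i) j) /
              ((∏ i, poch (b i) j) * (Nat.factorial j : ℂ)) * x ^ j) := by
  have hA : ∏ i, poch (a i) n ≠ 0 := prod_ne_zero_iff.2 fun i _ ↦ ha i
  have hB : ∏ i, poch (b i) n ≠ 0 := prod_ne_zero_iff.2 fun i _ ↦ hb i n le_rfl
  have hF : (n.factorial : ℂ) ≠ 0 := Nat.cast_ne_zero.2 n.factorial_ne_zero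
  have hterm : ∀ (m j : ℕ), (poch (-(m : ℂ)) j * ∏ i, poch (a i) j) /
      ((∏ i, poch (b i) j) * (j.factorial : ℂ)) * x ^ j =
      poch (-m) j * ((∏ i, poch (a i) j) / ((∏ i, poch (b i) j) * j.factorial) * x ^ j) :=
    fun m j ↦ by ring
  simp only [hterm, sum_range_choose_mul_neg_one_pow_mul_sum_poch_neg]
  field_simp
end
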